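/- arXiv:1308.0401 — 3 statements merged into one kernel-verified Lean document; each statement's English description precedes it below -/
import Mathlib

section
/- Assume Hypothesis (*) with r ≥ 3. Then s ≤ 4. Moreover, if s = 4 then the adjacency design D(Γ) is N-nicely affine with r parallel classes of blocks (the N-orbits on B'), and the diameter of Γ is exactly 4. -/
open SimpleGraph

section Prelude

variable {V : Type*}

/-- `g` is an automorphism of the graph `Γ`. -/
def IsGraphAut (Γ : SimpleGraph V) (g : Equiv.Perm V) : Prop :=
  ∀ u v : V, Γ.Adj (g u) (g v) ↔ Γ.Adj u v

/-- `(B | Bᶜ)` is an (ordered) bipartition of `Γ`: every edge joins `B` and `Bᶜ`. -/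
def IsBipartition (Γ : SimpleGraph V) (B : Set V) : Prop :=
  ∀ u v : V, Γ.Adj u v → (u ∈ B ↔ v ∉ B)

/-- The orbit of `x` under a subgroup `N` of permutations of `V`. -/
def POrbit (N : Subgroup (Equiv.Perm V)) (x : V) : Set V :=
  {y | ∃ n ∈ N, n x = y}

/-- `Γ` is locally `(G,s)`-distance transitive: the diameter is at least `s` and for
every vertex `v` and every `1 ≤ i ≤ s` the stabiliser of `v` in `G` is transitive on
the set of vertices at distance `i` from `v`. -/
def LocallyDistTrans (Γ : SimpleGraph V) (G : Subgroup (Equiv.Perm V)) (s : ℕ) : Prop :=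
  s ≤ Γ.diam ∧
    ∀ (v x y : V) (i : ℕ), 1 ≤ i → i ≤ s → Γ.dist v x = i → Γ.dist v y = i →
      ∃ g ∈ G, g v = v ∧ g x = y

/-- `Γ`, bipartite with ordered bipartition `(B | Bᶜ)`, is `r`-starlike relative to `N`:
`N` leaves `B` invariant, is transitive on `B`, and has exactly `r` orbits on `Bᶜ`. -/
def IsStarlike (Γ : SimpleGraph V) (B : Set V) (N : Subgroup (Equiv.Perm V)) (r : ℕ) : Prop :=
  (∀ n ∈ N, ∀ v : V, n v ∈ B ↔ v ∈ B) ∧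
    (∀ x ∈ B, ∀ y ∈ B, ∃ n ∈ N, n x = y) ∧
    {S : Set V | ∃ x ∈ Bᶜ, S = POrbit N x}.ncard = r

/-- `G` is transitive on the set `S` of (ordered) pairs. -/
def PairTrans (G : Subgroup (Equiv.Perm V)) (S : Set (V × V)) : Prop :=
  ∀ p ∈ S, ∀ q ∈ S, ∃ g ∈ G, g p.1 = q.1 ∧ g p.2 = q.2

/-- The adjacency design of the bipartite graph `Γ` with ordered bipartition `(B | Bᶜ)`
(points `B`, blocks `Bᶜ`, incidence = adjacency) is `G`-pairwise transitive. -/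
def AdjPT (Γ : SimpleGraph V) (B : Set V) (G : Subgroup (Equiv.Perm V)) : Prop :=
  (∀ g ∈ G, ∀ v : V, g v ∈ B ↔ v ∈ B) ∧
  PairTrans G {p | p.1 ∈ B ∧ p.2 ∈ Bᶜ ∧ Γ.Adj p.1 p.2} ∧
  PairTrans G {p | p.1 ∈ B ∧ p.2 ∈ Bᶜ ∧ ¬ Γ.Adj p.1 p.2} ∧
  PairTrans G {p | p.1 ∈ B ∧ p.2 ∈ B ∧ p.1 ≠ p.2 ∧ ∃ b ∈ Bᶜ, Γ.Adj p.1 b ∧ Γ.Adj p.2 b} ∧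
  PairTrans G {p | p.1 ∈ B ∧ p.2 ∈ B ∧ p.1 ≠ p.2 ∧ ¬ ∃ b ∈ Bᶜ, Γ.Adj p.1 b ∧ Γ.Adj p.2 b} ∧
  PairTrans G {p | p.1 ∈ Bᶜ ∧ p.2 ∈ Bᶜ ∧ p.1 ≠ p.2 ∧ ∃ x ∈ B, Γ.Adj x p.1 ∧ Γ.Adj x p.2} ∧
  PairTrans G {p | p.1 ∈ Bᶜ ∧ p.2 ∈ Bᶜ ∧ p.1 ≠ p.2 ∧ ¬ ∃ x ∈ B, Γ.Adj x p.1 ∧ Γ.Adj x p.2}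

/-- The adjacency design of `Γ` (points `B`, blocks `Bᶜ`) is `N`-nicely affine:
`N` acts as automorphisms preserving the biparts, transitively on points, and there is a
constant `μ` such that distinct blocks in different `N`-orbits have exactly `μ` common
points, while distinct blocks in the same `N`-orbit have no common point. -/
def AdjNA (Γ : SimpleGraph V) (B : Set V) (N : Subgroup (Equiv.Perm V)) : Prop :=
  (∀ n ∈ N, ∀ v : V, n v ∈ B ↔ v ∈ B) ∧
  (∀ x ∈ B, ∀ y ∈ B, ∃ n ∈ N, n x = y) ∧
  ∃ μ : ℕ, ∀ b ∈ Bᶜ, ∀ b' ∈ Bᶜ, b ≠ b' →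
    ((b' ∈ POrbit N b → ¬ ∃ x, Γ.Adj x b ∧ Γ.Adj x b') ∧
     (b' ∉ POrbit N b → {x | Γ.Adj x b ∧ Γ.Adj x b'}.ncard = μ))

/-- The adjacency design of `Γ` (points `B`, blocks `Bᶜ`) is affine: the blocks can be
partitioned into parallel classes, and there is a positive constant `μ` such that blocks
in distinct parallel classes have exactly `μ` common points. -/
def AdjAffine (Γ : SimpleGraph V) (B : Set V) : Prop :=
  ∃ 𝓒 : Set (Set V), (∀ C ∈ 𝓒, C ⊆ Bᶜ) ∧ (∀ b ∈ Bᶜ, ∃! C, C ∈ 𝓒 ∧ b ∈ C) ∧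
    (∀ C ∈ 𝓒, ∀ x ∈ B, ∃! b, b ∈ C ∧ Γ.Adj x b) ∧
    ∃ μ : ℕ, 0 < μ ∧ ∀ C ∈ 𝓒, ∀ C' ∈ 𝓒, C ≠ C' → ∀ b ∈ C, ∀ b' ∈ C',
      {x | Γ.Adj x b ∧ Γ.Adj x b'}.ncard = μ

end Prelude

section DesignPrelude

variable {P L : Type*}

/-- The design `(P, L, I)` is `G`-pairwise transitive. -/
def DesignPT (I : P → L → Prop) (G : Type*) [Group G] [MulAction G P] [MulAction G L] :
    Prop :=
  (∀ (x : P) (b : L) (x' : P) (b' : L), I x b → I x' b' →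
      ∃ g : G, g • x = x' ∧ g • b = b') ∧
  (∀ (x : P) (b : L) (x' : P) (b' : L), ¬ I x b → ¬ I x' b' →
      ∃ g : G, g • x = x' ∧ g • b = b') ∧
  (∀ x y x' y' : P, x ≠ y → x' ≠ y' → (∃ b, I x b ∧ I y b) → (∃ b, I x' b ∧ I y' b) →
      ∃ g : G, g • x = x' ∧ g • y = y') ∧
  (∀ x y x' y' : P, x ≠ y → x' ≠ y' → ¬ (∃ b, I x b ∧ I y b) → ¬ (∃ b, I x' b ∧ I y' b) →
      ∃ g : G, g • x = x' ∧ g • y = y') ∧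
  (∀ b c b' c' : L, b ≠ c → b' ≠ c' → (∃ x, I x b ∧ I x c) → (∃ x, I x b' ∧ I x c') →
      ∃ g : G, g • b = b' ∧ g • c = c') ∧
  (∀ b c b' c' : L, b ≠ c → b' ≠ c' → ¬ (∃ x, I x b ∧ I x c) → ¬ (∃ x, I x b' ∧ I x c') →
      ∃ g : G, g • b = b' ∧ g • c = c')

/-- The design `(P, L, I)` is `N`-nicely affine for the subgroup `N` of `G`. -/
def DesignNA (I : P → L → Prop) (G : Type*) [Group G] [MulAction G P] [MulAction G L]
    (N : Subgroup G) : Prop :=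
  (∀ x y : P, ∃ n ∈ N, n • x = y) ∧
  ∃ μ : ℕ, ∀ b b' : L, b ≠ b' →
    (((∃ n ∈ N, n • b = b') → ¬ ∃ x, I x b ∧ I x b') ∧
     ((¬ ∃ n ∈ N, n • b = b') → {x | I x b ∧ I x b'}.ncard = μ))

/-- The incidence graph of the design `(P, L, I)`. -/
def DIncGraph (I : P → L → Prop) : SimpleGraph (P ⊕ L) :=
  SimpleGraph.fromRel (fun a b => ∃ x s, a = Sum.inl x ∧ b = Sum.inr s ∧ I x s)

end DesignPrelude

section SetDesign

variable {V : Type*}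

/-- Pairwise transitivity for a design whose points are the elements of `V`, whose
blocks are the members of `𝓑` (identified with their point-sets) and whose
incidence relation is membership; `G` is a group of permutations of `V`. -/
def SetPT (𝓑 : Set (Set V)) (G : Subgroup (Equiv.Perm V)) : Prop :=
  (∀ x : V, ∀ s ∈ 𝓑, ∀ x' : V, ∀ s' ∈ 𝓑, x ∈ s → x' ∈ s' →
      ∃ g ∈ G, g x = x' ∧ (fun z => g z) '' s = s') ∧
  (∀ x : V, ∀ s ∈ 𝓑, ∀ x' : V, ∀ s' ∈ 𝓑, x ∉ s → x' ∉ s' →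
      ∃ g ∈ G, g x = x' ∧ (fun z => g z) '' s = s') ∧
  (∀ x y x' y' : V, x ≠ y → x' ≠ y' → (∃ s ∈ 𝓑, x ∈ s ∧ y ∈ s) → (∃ s ∈ 𝓑, x' ∈ s ∧ y' ∈ s) →
      ∃ g ∈ G, g x = x' ∧ g y = y') ∧
  (∀ x y x' y' : V, x ≠ y → x' ≠ y' → ¬ (∃ s ∈ 𝓑, x ∈ s ∧ y ∈ s) → ¬ (∃ s ∈ 𝓑, x' ∈ s ∧ y' ∈ s) →
      ∃ g ∈ G, g x = x' ∧ g y = y') ∧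
  (∀ s ∈ 𝓑, ∀ t ∈ 𝓑, ∀ s' ∈ 𝓑, ∀ t' ∈ 𝓑, s ≠ t → s' ≠ t' →
      (s ∩ t).Nonempty → (s' ∩ t').Nonempty →
      ∃ g ∈ G, (fun z => g z) '' s = s' ∧ (fun z => g z) '' t = t') ∧
  (∀ s ∈ 𝓑, ∀ t ∈ 𝓑, ∀ s' ∈ 𝓑, ∀ t' ∈ 𝓑, s ≠ t → s' ≠ t' →
      s ∩ t = ∅ → s' ∩ t' = ∅ →
      ∃ g ∈ G, (fun z => g z) '' s = s' ∧ (fun z => g z) '' t = t')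

/-- Nice affineness for a design with point set `V`, blocks `𝓑` (point-sets) and
incidence given by membership, relative to a permutation group `N`. -/
def SetNA (𝓑 : Set (Set V)) (N : Subgroup (Equiv.Perm V)) : Prop :=
  (∀ x y : V, ∃ n ∈ N, n x = y) ∧
  (∀ n ∈ N, ∀ s ∈ 𝓑, (fun z => n z) '' s ∈ 𝓑) ∧
  ∃ μ : ℕ, ∀ s ∈ 𝓑, ∀ s' ∈ 𝓑, s ≠ s' →
    (((∃ n ∈ N, (fun z => n z) '' s = s') → s ∩ s' = ∅) ∧
     ((¬ ∃ n ∈ N, (fun z => n z) '' s = s') → (s ∩ s').ncard = μ))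

end SetDesign

section QuotientGraph

variable {V : Type*}

/-- The setoid on vertices whose classes are the `N`-orbits. -/
def orbitSetoid (N : Subgroup (Equiv.Perm V)) : Setoid V where
  r x y := ∃ n ∈ N, n x = y
  iseqv := by
    refine ⟨fun x => ⟨1, N.one_mem, rfl⟩, ?_, ?_⟩
    · rintro x y ⟨n, hn, rfl⟩
      exact ⟨n⁻¹, N.inv_mem hn, by simp⟩
    · rintro x y z ⟨n, hn, rfl⟩ ⟨m, hm, rfl⟩
      exact ⟨m * n, N.mul_mem hm hn, rfl⟩

/-- The normal quotient graph `Γ_N`: vertices are the `N`-orbits, two distinct orbits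
being adjacent iff some vertex of one is adjacent to some vertex of the other. -/
def quotGraph (Γ : SimpleGraph V) (N : Subgroup (Equiv.Perm V)) :
    SimpleGraph (Quotient (orbitSetoid N)) :=
  SimpleGraph.fromRel (fun a b => ∃ x y : V, Γ.Adj x y ∧
    Quotient.mk (orbitSetoid N) x = a ∧ Quotient.mk (orbitSetoid N) y = b)

end QuotientGraph

section Subdivision

variable {W : Type*}

/-- The subdivision graph `S(Σ)` of a graph `Σ`: vertices are `EΣ ⊕ VΣ`, an edge
being adjacent to its endpoints. -/
def SubdivisionGraph (Sg : SimpleGraph W) : SimpleGraph (↥Sg.edgeSet ⊕ W) :=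
  SimpleGraph.fromRel (fun a b => ∃ (e : Sg.edgeSet) (w : W),
    a = Sum.inl e ∧ b = Sum.inr w ∧ w ∈ (e : Sym2 W))

/-- The graph on `B'` in which two vertices are adjacent iff they are at distance `2`
in `Γ`. -/
def distTwoGraph (Γ : SimpleGraph W) (B' : Set W) : SimpleGraph ↥B' where
  Adj a b := Γ.dist ↑a ↑b = 2
  symm := by
    constructor
    intro a b h
    rwa [SimpleGraph.dist_comm]
  loopless := by
    constructor
    intro a h
    simp [SimpleGraph.dist_self] at h

/-- `f 0, f 1, …, f t` is a `t`-arc of `Sg`. -/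
def IsArcOf (Sg : SimpleGraph W) (t : ℕ) (f : ℕ → W) : Prop :=
  (∀ i : ℕ, i < t → Sg.Adj (f i) (f (i + 1))) ∧
  (∀ i : ℕ, 1 ≤ i → i + 1 ≤ t → f (i - 1) ≠ f (i + 1))

end Subdivision

/-!
Since `N ⊴ G`, every `g ∈ G` maps `N`-orbits to `N`-orbits. If two blocks of one `N`-orbit had a
common point `x`, then `x` would also lie on a block `y` of another orbit, and an element of `G_b`
moving the first pair to `(b, y)` would put `y` into the orbit of `b`. Spreading points at a given
distance over all orbits via `G_x`, the same argument shows that blocks at distance `4` lie in one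
orbit. A block of a third orbit next to a geodesic then rules out blocks at distance `6`, so
blocks of distinct orbits are at distance `2`, points and blocks at distance at most `3`, and
`diam Γ ≤ 4`. For `s = 4`, `G` is transitive on blocks and `G_b` on the blocks at distance `2`
from `b`, so blocks of distinct orbits share a constant number of points.
-/

namespace SimpleGraph

variable {V V' : Type*} {G : SimpleGraph V} {G' : SimpleGraph V'}

lemma Iso.dist_le (φ : G ≃g G') (u v : V) : G'.dist (φ u) (φ v) ≤ G.dist u v := by
  by_cases h : G.Reachable u v
  · obtain ⟨p, hp⟩ := h.exists_walk_length_eq_dist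
    simpa [hp] using SimpleGraph.dist_le (p.map φ.toHom)
  · rw [dist_eq_zero_of_not_reachable (Iso.reachable_iff.not.mpr h)]
    exact Nat.zero_le _

lemma Iso.dist_eq (φ : G ≃g G') (u v : V) : G'.dist (φ u) (φ v) = G.dist u v :=
  (φ.dist_le u v).antisymm <| by simpa using φ.symm.dist_le (φ u) (φ v)

lemma dist_eq_two_iff {u v : V} :
    G.dist u v = 2 ↔ u ≠ v ∧ ¬ G.Adj u v ∧ (G.commonNeighbors u v).Nonempty := by
  rw [← edist_eq_two_iff, dist, ENat.toNat_eq_iff two_ne_zero]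
  rfl

lemma Connected.exists_dist_eq_of_le (hconn : G.Connected) {u v : V} {k : ℕ}
    (hk : k ≤ G.dist u v) : ∃ w, G.dist u w = k ∧ G.dist w v = G.dist u v - k := by
  obtain ⟨p, hp⟩ := hconn.exists_walk_length_eq_dist u v
  have hfst := dist_le (p.take k)
  have hsnd := dist_le (p.drop k)
  have htri := hconn.dist_triangle (u := u) (v := p.getVert k) (w := v)
  simp only [Walk.take_length, Walk.drop_length] at hfst hsnd
  exact ⟨p.getVert k, by omega, by omega⟩

lemma diam_le_of_forall_dist_le {n : ℕ} (h : ∀ u v, G.dist u v ≤ n) : G.diam ≤ n := by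
  rcases isEmpty_or_nonempty V with hV | hV
  · simp [diam_eq_zero.mpr (Or.inr inferInstance)]
  · obtain ⟨u, v, huv⟩ := G.exists_dist_eq_diam
    exact huv ▸ h u v

end SimpleGraph

lemma Set.exists_mem_ne_ne_of_two_lt_ncard {α : Type*} {s : Set α} (hs : 2 < s.ncard) (a b : α) :
    ∃ c ∈ s, c ≠ a ∧ c ≠ b := by
  have hpair : ({a, b} : Set α).ncard < s.ncard :=
    ((Set.ncard_insert_le a {b}).trans_eq (by simp)).trans_lt hs
  obtain ⟨c, hcs, hcab⟩ := Set.exists_mem_notMem_of_ncard_lt_ncard hpair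
  simp only [Set.mem_insert_iff, Set.mem_singleton_iff, not_or] at hcab
  exact ⟨c, hcs, hcab⟩

open SimpleGraph

section Automorphisms

variable {V : Type*} {Γ : SimpleGraph V} {g : Equiv.Perm V}

def IsGraphAut.toIso (hg : IsGraphAut Γ g) : Γ ≃g Γ := ⟨g, hg _ _⟩

lemma IsGraphAut.dist_apply (hg : IsGraphAut Γ g) (u v : V) :
    Γ.dist (g u) (g v) = Γ.dist u v :=
  hg.toIso.dist_eq u v

lemma IsGraphAut.ncard_setOf_adj_adj (hg : IsGraphAut Γ g) (b b' : V) :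
    {x | Γ.Adj x (g b) ∧ Γ.Adj x (g b')}.ncard = {x | Γ.Adj x b ∧ Γ.Adj x b'}.ncard := by
  have hpre : {x | Γ.Adj x b ∧ Γ.Adj x b'} = g ⁻¹' {x | Γ.Adj x (g b) ∧ Γ.Adj x (g b')} := by
    ext x
    simp [hg x b, hg x b']
  rw [hpre, Set.ncard_preimage_of_injective_subset_range g.injective (by simp)]

end Automorphisms

namespace IsBipartition

variable {V : Type*} {Γ : SimpleGraph V} {B : Set V} {u v x : V}

lemma mem_compl_of_adj (hbip : IsBipartition Γ B) (h : Γ.Adj u v) (hu : u ∈ B) : v ∈ Bᶜ :=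
  (hbip u v h).mp hu

lemma mem_of_adj (hbip : IsBipartition Γ B) (h : Γ.Adj u v) (hu : u ∈ Bᶜ) : v ∈ B :=
  not_not.mp fun hv => hu ((hbip u v h).mpr hv)

open scoped Classical in
noncomputable def toColoring (hbip : IsBipartition Γ B) : Γ.Coloring Bool :=
  Coloring.mk (fun v => decide (v ∈ B)) fun {u v} h => by
    have := hbip u v h
    by_cases hu : u ∈ B <;> simp_all

lemma even_dist_iff (hbip : IsBipartition Γ B) (h : Γ.Reachable u v) :
    Even (Γ.dist u v) ↔ (u ∈ B ↔ v ∈ B) := by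
  obtain ⟨p, hp⟩ := h.exists_walk_length_eq_dist
  rw [← hp, hbip.toColoring.even_length_iff_congr p]
  simp [toColoring, Coloring.mk]

lemma even_dist_of_mem_compl (hbip : IsBipartition Γ B) (h : Γ.Reachable u v) (hu : u ∈ Bᶜ)
    (hv : v ∈ Bᶜ) : Even (Γ.dist u v) :=
  (hbip.even_dist_iff h).mpr (iff_of_false hu hv)

lemma mem_compl_of_even_dist (hbip : IsBipartition Γ B) (h : Γ.Reachable u v) (hu : u ∈ Bᶜ)
    (he : Even (Γ.dist u v)) : v ∈ Bᶜ :=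
  fun hv => hu (((hbip.even_dist_iff h).mp he).mpr hv)

lemma mem_iff_of_dist_eq (hbip : IsBipartition Γ B) (hconn : Γ.Connected)
    (h : Γ.dist x u = Γ.dist x v) : u ∈ B ↔ v ∈ B := by
  have hu := hbip.even_dist_iff (hconn x u)
  have hv := hbip.even_dist_iff (hconn x v)
  rw [h] at hu
  tauto

lemma dist_eq_two (hbip : IsBipartition Γ B) (hu : u ∈ Bᶜ) (hne : u ≠ v)
    (hxu : Γ.Adj x u) (hxv : Γ.Adj x v) : Γ.dist u v = 2 := by
  have hx : x ∈ B := hbip.mem_of_adj hxu.symm hu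
  refine dist_eq_two_iff.mpr ⟨hne, fun huv => ?_, x, hxu.symm, hxv.symm⟩
  exact hbip.mem_compl_of_adj hxv hx (hbip.mem_of_adj huv hu)

end IsBipartition

section Orbits

variable {V : Type*} {G N : Subgroup (Equiv.Perm V)} {g : Equiv.Perm V} {x y : V}

lemma mem_POrbit_self (N : Subgroup (Equiv.Perm V)) (x : V) : x ∈ POrbit N x :=
  ⟨1, N.one_mem, rfl⟩

lemma POrbit_eq_of_mem (h : y ∈ POrbit N x) : POrbit N y = POrbit N x := by
  obtain ⟨n, hn, rfl⟩ := h
  ext z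
  constructor
  · rintro ⟨m, hm, rfl⟩
    exact ⟨m * n, N.mul_mem hm hn, rfl⟩
  · rintro ⟨m, hm, rfl⟩
    exact ⟨m * n⁻¹, N.mul_mem hm (N.inv_mem hn), by simp⟩

lemma apply_mem_POrbit_apply (hnorm : ∀ g ∈ G, ∀ n ∈ N, g * n * g⁻¹ ∈ N) (hg : g ∈ G)
    (h : y ∈ POrbit N x) : g y ∈ POrbit N (g x) := by
  obtain ⟨n, hn, rfl⟩ := h
  exact ⟨g * n * g⁻¹, hnorm g hg n hn, by simp⟩

def POrbits (N : Subgroup (Equiv.Perm V)) (A : Set V) : Set (Set V) :=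
  {S | ∃ x ∈ A, S = POrbit N x}

end Orbits

section Starlike

variable {V : Type*} {Γ : SimpleGraph V} {B : Set V} {G N : Subgroup (Equiv.Perm V)} {s : ℕ}

def MeetsAllOrbits (Γ : SimpleGraph V) (B : Set V) (N : Subgroup (Equiv.Perm V)) : Prop :=
  ∀ x ∈ B, ∀ c ∈ Bᶜ, ∃ y, Γ.Adj x y ∧ y ∈ POrbit N c

lemma meetsAllOrbits_of_transitive [Nontrivial V] (hconn : Γ.Connected) (hbip : IsBipartition Γ B)
    (hNaut : ∀ n ∈ N, IsGraphAut Γ n) (hNtrans : ∀ x ∈ B, ∀ y ∈ B, ∃ n ∈ N, n x = y) :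
    MeetsAllOrbits Γ B N := by
  intro x hx c hc
  obtain ⟨z, hcz⟩ := hconn.preconnected.exists_adj_of_nontrivial c
  obtain ⟨n, hn, rfl⟩ := hNtrans z (hbip.mem_of_adj hcz hc) x hx
  exact ⟨n c, (hNaut n hn z c).mpr hcz.symm, n, hn, rfl⟩

namespace LocallyDistTrans

lemma dist_ne_two_of_mem_POrbit (hldt : LocallyDistTrans Γ G s) (hs : 2 ≤ s)
    (hbip : IsBipartition Γ B) (hnorm : ∀ g ∈ G, ∀ n ∈ N, g * n * g⁻¹ ∈ N)
    (hmeet : MeetsAllOrbits Γ B N) (hr : 1 < (POrbits N Bᶜ).ncard)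
    {b c : V} (hb : b ∈ Bᶜ) (hc : c ∈ POrbit N b) : Γ.dist b c ≠ 2 := by
  intro hbc
  obtain ⟨-, -, x, hbx, -⟩ := dist_eq_two_iff.mp hbc
  obtain ⟨_, ⟨c', hc', rfl⟩, hc'b⟩ := Set.exists_ne_of_one_lt_ncard hr (POrbit N b)
  obtain ⟨y, hxy, hy⟩ := hmeet x (hbip.mem_of_adj hbx hb) c' hc'
  have hby : b ≠ y := by
    rintro rfl
    exact hc'b (POrbit_eq_of_mem hy).symm
  obtain ⟨g, hg, hgb, hgc⟩ :=
    hldt.2 b c y 2 one_le_two hs hbc (hbip.dist_eq_two hb hby hbx.symm hxy)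
  have hyb : y ∈ POrbit N b := hgb ▸ hgc ▸ apply_mem_POrbit_apply hnorm hg hc
  exact hc'b ((POrbit_eq_of_mem hy).symm.trans (POrbit_eq_of_mem hyb))

lemma exists_mem_POrbit_dist_eq (hldt : LocallyDistTrans Γ G s) (hs : 1 ≤ s)
    (hGaut : ∀ g ∈ G, IsGraphAut Γ g) (hnorm : ∀ g ∈ G, ∀ n ∈ N, g * n * g⁻¹ ∈ N)
    (hmeet : MeetsAllOrbits Γ B N) {x w c : V} (hx : x ∈ B) (hw : w ∈ Bᶜ) (hc : c ∈ Bᶜ) :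
    ∃ e ∈ POrbit N c, Γ.dist x e = Γ.dist x w := by
  obtain ⟨y, hxy, hy⟩ := hmeet x hx w hw
  obtain ⟨y', hxy', hy'⟩ := hmeet x hx c hc
  obtain ⟨g, hg, hgx, hgy⟩ := hldt.2 x y y' 1 le_rfl hs
    (dist_eq_one_iff_adj.mpr hxy) (dist_eq_one_iff_adj.mpr hxy')
  have hwy : w ∈ POrbit N y := POrbit_eq_of_mem hy ▸ mem_POrbit_self N w
  refine ⟨g w, POrbit_eq_of_mem hy' ▸ hgy ▸ apply_mem_POrbit_apply hnorm hg hwy, ?_⟩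
  conv_lhs => rw [← hgx]
  exact (hGaut g hg).dist_apply x w

lemma mem_POrbit_of_dist_eq_four (hldt : LocallyDistTrans Γ G s) (hs : 4 ≤ s)
    (hconn : Γ.Connected) (hbip : IsBipartition Γ B) (hGaut : ∀ g ∈ G, IsGraphAut Γ g)
    (hnorm : ∀ g ∈ G, ∀ n ∈ N, g * n * g⁻¹ ∈ N) (hmeet : MeetsAllOrbits Γ B N)
    (hr : 1 < (POrbits N Bᶜ).ncard) {b w : V} (hb : b ∈ Bᶜ) (hw : w ∈ Bᶜ)
    (hbw : Γ.dist b w = 4) : w ∈ POrbit N b := by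
  obtain ⟨x, hbx, hxw⟩ := hconn.exists_dist_eq_of_le (k := 1) (by omega : 1 ≤ Γ.dist b w)
  have hx : x ∈ B := hbip.mem_of_adj (dist_eq_one_iff_adj.mp hbx) hb
  obtain ⟨e, he, hxe⟩ := hldt.exists_mem_POrbit_dist_eq (by omega) hGaut hnorm hmeet hx hw hb
  have heB : e ∈ Bᶜ := (hbip.mem_iff_of_dist_eq hconn hxe).not.mpr hw
  have hbe : Γ.dist b e = 4 := by
    have heven := hbip.even_dist_of_mem_compl (hconn b e) hb heB
    have hne2 := hldt.dist_ne_two_of_mem_POrbit (by omega) hbip hnorm hmeet hr hb he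
    have hle := hconn.dist_triangle (u := b) (v := x) (w := e)
    have hge := hconn.dist_triangle (u := x) (v := b) (w := e)
    rw [dist_comm (u := x) (v := b)] at hge
    obtain ⟨k, hk⟩ := heven
    omega
  obtain ⟨g, hg, hgb, hge⟩ := hldt.2 b e w 4 (by norm_num) hs hbe hbw
  exact hgb ▸ hge ▸ apply_mem_POrbit_apply hnorm hg he

lemma dist_ne_six (hldt : LocallyDistTrans Γ G s) (hs : 4 ≤ s)
    (hconn : Γ.Connected) (hbip : IsBipartition Γ B) (hGaut : ∀ g ∈ G, IsGraphAut Γ g)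
    (hnorm : ∀ g ∈ G, ∀ n ∈ N, g * n * g⁻¹ ∈ N) (hmeet : MeetsAllOrbits Γ B N)
    (hr : 2 < (POrbits N Bᶜ).ncard) {b z : V} (hb : b ∈ Bᶜ) (hz : z ∈ Bᶜ) :
    Γ.dist b z ≠ 6 := by
  -- On a geodesic `b z₁ z₂ z₃ z₄ z₅ z`, a block `f` on `z₁` from a third orbit is at distance `2`
  -- from `z₄` (distance `4` would put it in the orbit of `z₄`, i.e. of `b`), so at distance `4`
  -- from `z`; hence it lies in the orbit of `z`, which is that of `z₂`.
  intro hbz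
  have hS {u v : V} := hldt.mem_POrbit_of_dist_eq_four hs hconn hbip hGaut hnorm hmeet
    (by omega) (b := u) (w := v)
  obtain ⟨z₂, hbz₂, hz₂z⟩ := hconn.exists_dist_eq_of_le (k := 2) (by omega : 2 ≤ Γ.dist b z)
  obtain ⟨z₄, hz₂z₄, hz₄z⟩ := hconn.exists_dist_eq_of_le (k := 2) (by omega : 2 ≤ Γ.dist z₂ z)
  obtain ⟨z₁, hbz₁, hz₁z₂⟩ := hconn.exists_dist_eq_of_le (k := 1) (by omega : 1 ≤ Γ.dist b z₂)
  have hbz₄ : Γ.dist b z₄ = 4 := by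
    have := hconn.dist_triangle (u := b) (v := z₂) (w := z₄)
    have := hconn.dist_triangle (u := b) (v := z₄) (w := z)
    omega
  have hz₂ : z₂ ∈ Bᶜ := hbip.mem_compl_of_even_dist (hconn b z₂) hb (by rw [hbz₂]; decide)
  have hz₄ : z₄ ∈ Bᶜ := hbip.mem_compl_of_even_dist (hconn b z₄) hb (by rw [hbz₄]; decide)
  have hz₁ : z₁ ∈ B := hbip.mem_of_adj (dist_eq_one_iff_adj.mp hbz₁) hb
  obtain ⟨_, ⟨c, hc, rfl⟩, hcb, hcz₂⟩ :=
    Set.exists_mem_ne_ne_of_two_lt_ncard hr (POrbit N b) (POrbit N z₂)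
  obtain ⟨f, hz₁f, hf⟩ := hmeet z₁ hz₁ c hc
  have hfB : f ∈ Bᶜ := hbip.mem_compl_of_adj hz₁f hz₁
  have hz₁f' : Γ.dist z₁ f = 1 := dist_eq_one_iff_adj.mpr hz₁f
  have hbf : Γ.dist b f ≤ 2 := by
    have := hconn.dist_triangle (u := b) (v := z₁) (w := f)
    omega
  have hfz₄ : Γ.dist f z₄ = 2 := by
    have h4 : Γ.dist f z₄ ≠ 4 := fun h => hcb <| (POrbit_eq_of_mem hf).symm.trans <|
      (POrbit_eq_of_mem (hS hfB hz₄ h)).symm.trans (POrbit_eq_of_mem (hS hb hz₄ hbz₄))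
    have := hconn.dist_triangle (u := b) (v := f) (w := z₄)
    have := hconn.dist_triangle (u := f) (v := z₁) (w := z₄)
    have := hconn.dist_triangle (u := z₁) (v := z₂) (w := z₄)
    have hfz₁ : Γ.dist f z₁ = 1 := dist_eq_one_iff_adj.mpr hz₁f.symm
    obtain ⟨k, hk⟩ := hbip.even_dist_of_mem_compl (hconn f z₄) hfB hz₄
    omega
  have hfz : Γ.dist f z = 4 := by
    have := hconn.dist_triangle (u := f) (v := z₄) (w := z)
    have := hconn.dist_triangle (u := b) (v := f) (w := z)
    omega
  exact hcz₂ <| (POrbit_eq_of_mem hf).symm.trans <|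
    (POrbit_eq_of_mem (hS hfB hz hfz)).symm.trans (POrbit_eq_of_mem (hS hz₂ hz (by omega)))

lemma dist_eq_two_of_POrbit_ne (hldt : LocallyDistTrans Γ G s) (hs : 4 ≤ s)
    (hconn : Γ.Connected) (hbip : IsBipartition Γ B) (hGaut : ∀ g ∈ G, IsGraphAut Γ g)
    (hnorm : ∀ g ∈ G, ∀ n ∈ N, g * n * g⁻¹ ∈ N) (hmeet : MeetsAllOrbits Γ B N)
    (hr : 2 < (POrbits N Bᶜ).ncard) {b c : V} (hb : b ∈ Bᶜ) (hc : c ∈ Bᶜ)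
    (hbc : POrbit N b ≠ POrbit N c) : Γ.dist b c = 2 := by
  have hpos : 0 < Γ.dist b c := hconn.pos_dist_of_ne (by rintro rfl; exact hbc rfl)
  have h4 : Γ.dist b c ≠ 4 := fun h => hbc <| (POrbit_eq_of_mem <|
    hldt.mem_POrbit_of_dist_eq_four hs hconn hbip hGaut hnorm hmeet (by omega) hb hc h).symm
  have h6 : ¬ 6 ≤ Γ.dist b c := fun h => by
    obtain ⟨z, hbz, -⟩ := hconn.exists_dist_eq_of_le h
    have hz : z ∈ Bᶜ := hbip.mem_compl_of_even_dist (hconn b z) hb (by rw [hbz]; decide)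
    exact hldt.dist_ne_six hs hconn hbip hGaut hnorm hmeet hr hb hz hbz
  obtain ⟨k, hk⟩ := hbip.even_dist_of_mem_compl (hconn b c) hb hc
  omega

lemma dist_le_three (hldt : LocallyDistTrans Γ G s) (hs : 4 ≤ s)
    (hconn : Γ.Connected) (hbip : IsBipartition Γ B) (hGaut : ∀ g ∈ G, IsGraphAut Γ g)
    (hnorm : ∀ g ∈ G, ∀ n ∈ N, g * n * g⁻¹ ∈ N) (hmeet : MeetsAllOrbits Γ B N)
    (hr : 2 < (POrbits N Bᶜ).ncard) {x b : V} (hx : x ∈ B) (hb : b ∈ Bᶜ) :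
    Γ.dist x b ≤ 3 := by
  obtain ⟨_, ⟨c, hc, rfl⟩, hcb⟩ :=
    Set.exists_ne_of_one_lt_ncard (by omega : 1 < (POrbits N Bᶜ).ncard) (POrbit N b)
  obtain ⟨y, hxy, hy⟩ := hmeet x hx c hc
  have hyb : Γ.dist y b = 2 := hldt.dist_eq_two_of_POrbit_ne hs hconn hbip hGaut hnorm hmeet hr
    (hbip.mem_compl_of_adj hxy hx) hb ((POrbit_eq_of_mem hy).trans_ne hcb)
  have := hconn.dist_triangle (u := x) (v := y) (w := b)
  rw [dist_eq_one_iff_adj.mpr hxy] at this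
  omega

lemma diam_le_four [Nontrivial V] (hldt : LocallyDistTrans Γ G s) (hs : 4 ≤ s)
    (hconn : Γ.Connected) (hbip : IsBipartition Γ B) (hGaut : ∀ g ∈ G, IsGraphAut Γ g)
    (hnorm : ∀ g ∈ G, ∀ n ∈ N, g * n * g⁻¹ ∈ N) (hmeet : MeetsAllOrbits Γ B N)
    (hr : 2 < (POrbits N Bᶜ).ncard) : Γ.diam ≤ 4 := by
  have h3 {u v : V} (huv : u ∈ B ↔ v ∉ B) : Γ.dist u v ≤ 3 := by
    by_cases hu : u ∈ B
    · exact hldt.dist_le_three hs hconn hbip hGaut hnorm hmeet hr hu (huv.mp hu)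
    · rw [dist_comm]
      exact hldt.dist_le_three hs hconn hbip hGaut hnorm hmeet hr (by tauto) hu
  refine diam_le_of_forall_dist_le fun u v => ?_
  by_cases huv : u ∈ B ↔ v ∉ B
  · exact (h3 huv).trans (by norm_num)
  · obtain ⟨y, hvy⟩ := hconn.preconnected.exists_adj_of_nontrivial v
    have huy := h3 (u := u) (v := y) (by have := hbip v y hvy; tauto)
    have := hconn.dist_triangle (u := u) (v := y) (w := v)
    rw [dist_comm (u := y), dist_eq_one_iff_adj.mpr hvy] at this
    omega

lemma exists_apply_eq_of_mem_compl (hldt : LocallyDistTrans Γ G s) (hs : 4 ≤ s)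
    (hconn : Γ.Connected) (hbip : IsBipartition Γ B) (hGaut : ∀ g ∈ G, IsGraphAut Γ g)
    (hNG : N ≤ G) (hnorm : ∀ g ∈ G, ∀ n ∈ N, g * n * g⁻¹ ∈ N) (hmeet : MeetsAllOrbits Γ B N)
    (hr : 2 < (POrbits N Bᶜ).ncard) {a c : V} (ha : a ∈ Bᶜ) (hc : c ∈ Bᶜ) :
    ∃ g ∈ G, g a = c := by
  by_cases hac : POrbit N a = POrbit N c
  · obtain ⟨n, hn, hna⟩ : c ∈ POrbit N a := hac ▸ mem_POrbit_self N c
    exact ⟨n, hNG hn, hna⟩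
  · obtain ⟨-, -, x, hax, hcx⟩ := dist_eq_two_iff.mp <|
      hldt.dist_eq_two_of_POrbit_ne hs hconn hbip hGaut hnorm hmeet hr ha hc hac
    obtain ⟨g, hg, -, hga⟩ := hldt.2 x a c 1 le_rfl (by omega)
      (dist_eq_one_iff_adj.mpr hax.symm) (dist_eq_one_iff_adj.mpr hcx.symm)
    exact ⟨g, hg, hga⟩

lemma ncard_setOf_adj_adj_eq (hldt : LocallyDistTrans Γ G s) (hs : 4 ≤ s)
    (hconn : Γ.Connected) (hbip : IsBipartition Γ B) (hGaut : ∀ g ∈ G, IsGraphAut Γ g)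
    (hNG : N ≤ G) (hnorm : ∀ g ∈ G, ∀ n ∈ N, g * n * g⁻¹ ∈ N) (hmeet : MeetsAllOrbits Γ B N)
    (hr : 2 < (POrbits N Bᶜ).ncard) {b b' c c' : V} (hb : b ∈ Bᶜ) (hb' : b' ∈ Bᶜ)
    (hc : c ∈ Bᶜ) (hc' : c' ∈ Bᶜ) (hbb' : POrbit N b ≠ POrbit N b')
    (hcc' : POrbit N c ≠ POrbit N c') :
    {x | Γ.Adj x b ∧ Γ.Adj x b'}.ncard = {x | Γ.Adj x c ∧ Γ.Adj x c'}.ncard := by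
  have hdist {u u'} := hldt.dist_eq_two_of_POrbit_ne hs hconn hbip hGaut hnorm hmeet hr
    (b := u) (c := u')
  obtain ⟨g, hg, rfl⟩ :=
    hldt.exists_apply_eq_of_mem_compl hs hconn hbip hGaut hNG hnorm hmeet hr hb hc
  have hgb' : Γ.dist (g b) (g b') = 2 := ((hGaut g hg).dist_apply b b').trans (hdist hb hb' hbb')
  obtain ⟨g', hg', hg'b, hg'b'⟩ :=
    hldt.2 (g b) (g b') c' 2 (by norm_num) (by omega) hgb' (hdist hc hc' hcc')
  rw [← hg'b, ← hg'b', ← Equiv.Perm.mul_apply, ← Equiv.Perm.mul_apply,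
    (hGaut _ (G.mul_mem hg' hg)).ncard_setOf_adj_adj]

lemma adjNA (hldt : LocallyDistTrans Γ G s) (hs : 4 ≤ s)
    (hconn : Γ.Connected) (hbip : IsBipartition Γ B) (hGaut : ∀ g ∈ G, IsGraphAut Γ g)
    (hNG : N ≤ G) (hnorm : ∀ g ∈ G, ∀ n ∈ N, g * n * g⁻¹ ∈ N) (hmeet : MeetsAllOrbits Γ B N)
    (hr : 2 < (POrbits N Bᶜ).ncard) (hNB : ∀ n ∈ N, ∀ v : V, n v ∈ B ↔ v ∈ B)
    (hNtrans : ∀ x ∈ B, ∀ y ∈ B, ∃ n ∈ N, n x = y) : AdjNA Γ B N := by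
  obtain ⟨_, ⟨b₀, hb₀, rfl⟩, _, ⟨c₀, hc₀, rfl⟩, hne₀⟩ :=
    (Set.one_lt_ncard_iff_nontrivial_and_finite.mp (by omega : 1 < (POrbits N Bᶜ).ncard)).1
  refine ⟨hNB, hNtrans, {x | Γ.Adj x b₀ ∧ Γ.Adj x c₀}.ncard,
    fun b hb b' hb' hbb' => ⟨?_, fun hb'b => ?_⟩⟩
  · rintro hb'b ⟨x, hxb, hxb'⟩
    exact hldt.dist_ne_two_of_mem_POrbit (by omega) hbip hnorm hmeet (by omega) hb hb'b
      (hbip.dist_eq_two hb hbb' hxb hxb')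
  · exact hldt.ncard_setOf_adj_adj_eq hs hconn hbip hGaut hNG hnorm hmeet hr hb hb' hb₀ hc₀
      (fun h => hb'b (h ▸ mem_POrbit_self N b')) hne₀

end LocallyDistTrans

end Starlike

theorem statement13_general {V : Type*} (Γ : SimpleGraph V) (B : Set V)
    (hconn : Γ.Connected) (hbip : IsBipartition Γ B)
    (G N : Subgroup (Equiv.Perm V)) (hGaut : ∀ g ∈ G, IsGraphAut Γ g)
    (hNG : N ≤ G) (hnorm : ∀ g ∈ G, ∀ n ∈ N, g * n * g⁻¹ ∈ N)
    (r s : ℕ) (hr : 3 ≤ r)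
    (hstar : IsStarlike Γ B N r) (hldt : LocallyDistTrans Γ G s) :
    s ≤ 4 ∧
    (s = 4 →
      AdjNA Γ B N ∧
      {S : Set V | ∃ x ∈ Bᶜ, S = POrbit N x}.ncard = r ∧
      Γ.diam = 4) := by
  obtain ⟨hNB, hNtrans, hNorbs⟩ := hstar
  have hr' : 2 < (POrbits N Bᶜ).ncard := hNorbs ▸ hr
  have hfour (hs : 4 ≤ s) : Γ.diam ≤ 4 ∧ AdjNA Γ B N := by
    have : Nontrivial V := nontrivial_of_diam_ne_zero (G := Γ) (by have := hldt.1; omega)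
    have hmeet : MeetsAllOrbits Γ B N :=
      meetsAllOrbits_of_transitive hconn hbip (fun n hn => hGaut n (hNG hn)) hNtrans
    exact ⟨hldt.diam_le_four hs hconn hbip hGaut hnorm hmeet hr',
      hldt.adjNA hs hconn hbip hGaut hNG hnorm hmeet hr' hNB hNtrans⟩
  refine ⟨?_, fun hs => ⟨(hfour hs.ge).2, hNorbs, ?_⟩⟩
  · by_contra! hs
    have := (hfour hs.le).1
    have := hldt.1
    omega
  · exact (hfour hs.ge).1.antisymm (hs ▸ hldt.1)

/-- **Proposition `prop:affine`**.  Under Hypothesis (*) with `r ≥ 3`, we have `s ≤ 4`;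
moreover if `s = 4` then the adjacency design `D(Γ)` is `N`-nicely affine with `r`
parallel classes of blocks (the `N`-orbits on `Bᶜ`), and `Γ` has diameter exactly `4`. -/
theorem statement13 {V : Type*} [Fintype V] (Γ : SimpleGraph V) (B : Set V)
    (hconn : Γ.Connected) (hbip : IsBipartition Γ B)
    (hncb : ¬ ∀ x ∈ B, ∀ y ∈ Bᶜ, Γ.Adj x y)
    (G N : Subgroup (Equiv.Perm V)) (hGaut : ∀ g ∈ G, IsGraphAut Γ g)
    (hNG : N ≤ G) (hN1 : N ≠ ⊥) (hnorm : ∀ g ∈ G, ∀ n ∈ N, g * n * g⁻¹ ∈ N)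
    (r s : ℕ) (hr : 3 ≤ r) (hs : 2 ≤ s)
    (hstar : IsStarlike Γ B N r) (hldt : LocallyDistTrans Γ G s) :
    s ≤ 4 ∧
    (s = 4 →
      AdjNA Γ B N ∧
      {S : Set V | ∃ x ∈ Bᶜ, S = POrbit N x}.ncard = r ∧
      Γ.diam = 4) :=
  statement13_general Γ B hconn hbip G N hGaut hNG hnorm r s hr hstar hldt
end

section
/- Let Γ be a finite connected bipartite graph with ordered bipartition (B|B'), G ≤ Aut(Γ), 1 ≠ N ⊴ G, and r ≥ 3 an integer, such that Γ is r-starlike relative to N and locally (G,4)-distance transitive, and suppose N acts regularly on B; identify B with N via a base point v as above, and let M_1, …, M_r be the subgroups of N whose right cosets are the blocks of the adjacency design D(Γ). Then the stabiliser G_v acts 2-transitively by conjugation on the set {M_1, …, M_r}, and there is a prime p such that the subgroups M_i are pairwise isomorphic p-groups of exponent p. -/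
open SimpleGraph

/-!
Let `b_i` be the block through `v` with point set `M_i v`. Since `N` is normal in `G` and
regular on `B`, an element of `G_v` carries `M_i v` onto `M_j v` exactly when it conjugates
`M_i` onto `M_j`. Distance transitivity at distance `1` from `v` and at distance `2` from a
block `b_i'` makes `G` transitive on ordered pairs of distinct blocks through `v`; composing with
an element of `M_i' ∩ M_j'` brings such a map back into `G_v`, which gives 2-transitivity.
An element `x ≠ 1` of some `M_i` is determined by `x v`, a point at distance `2` from `v`, so
transitivity of `G_v` on those points makes all such elements conjugate. They therefore share
one order, and since a suitable power of any of them has prime order, that order is a prime `p`.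
-/

section Graph

variable {V : Type*} {Γ : SimpleGraph V}

theorem IsGraphAut.image_neighborSet {g : Equiv.Perm V} (hg : IsGraphAut Γ g) (b : V) :
    (fun x => g x) '' Γ.neighborSet b = Γ.neighborSet (g b) := by
  ext x
  refine ⟨?_, fun hx => ⟨g⁻¹ x, ?_, by simp⟩⟩
  · rintro ⟨y, hy, rfl⟩
    exact (hg b y).mpr hy
  · rw [SimpleGraph.mem_neighborSet, ← hg]
    simpa using hx

theorem IsBipartition.not_adj_of_adj_of_adj {B : Set V} (hbip : IsBipartition Γ B) {x y z : V}
    (hxz : Γ.Adj x z) (hzy : Γ.Adj z y) : ¬ Γ.Adj x y := fun hxy => by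
  have := hbip x z hxz
  have := hbip z y hzy
  have := hbip x y hxy
  tauto

theorem IsBipartition.dist_eq_two_s18 {B : Set V} (hbip : IsBipartition Γ B) {x y z : V}
    (hxy : x ≠ y) (hxz : Γ.Adj x z) (hzy : Γ.Adj z y) : Γ.dist x y = 2 := by
  have : Γ.edist x y = 2 := SimpleGraph.edist_eq_two_iff.mpr
    ⟨hxy, hbip.not_adj_of_adj_of_adj hxz hzy, z, hxz, hzy.symm⟩
  simp [SimpleGraph.dist, this]

theorem LocallyDistTrans.exists_apply_eq_apply_eq {B : Set V} {G : Subgroup (Equiv.Perm V)}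
    {s : ℕ} (hldt : LocallyDistTrans Γ G s) (hs : 2 ≤ s) (hbip : IsBipartition Γ B)
    (hGaut : ∀ g ∈ G, IsGraphAut Γ g) {v b c b' c' : V} (hb : Γ.Adj v b) (hc : Γ.Adj v c)
    (hb' : Γ.Adj v b') (hc' : Γ.Adj v c') (hbc : b ≠ c) (hbc' : b' ≠ c') :
    ∃ k ∈ G, k b = b' ∧ k c = c' := by
  obtain ⟨g, hgG, hgv, hgb⟩ := hldt.2 v b b' 1 le_rfl (by omega)
    (SimpleGraph.dist_eq_one_iff_adj.mpr hb) (SimpleGraph.dist_eq_one_iff_adj.mpr hb')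
  have hgc : Γ.Adj v (g c) := by simpa [hgv] using (hGaut g hgG v c).mpr hc
  have hne : b' ≠ g c := hgb ▸ g.injective.ne hbc
  obtain ⟨h, hhG, hhb', hhc⟩ := hldt.2 b' (g c) c' 2 one_le_two hs
    (hbip.dist_eq_two_s18 hne hb'.symm hgc) (hbip.dist_eq_two_s18 hbc' hb'.symm hc')
  exact ⟨h * g, mul_mem hhG hgG, by simp [hgb, hhb'], by simp [hhc]⟩

end Graph

section Group

variable {G : Type*} [Group G]

theorem exists_prime_forall_pow_eq_one [Finite G] {ι : Type*} (M : ι → Subgroup G)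
    (h : ∀ i j, ∀ x ∈ M i, ∀ y ∈ M j, x ≠ 1 → y ≠ 1 → orderOf x = orderOf y) :
    ∃ p : ℕ, p.Prime ∧ ∀ i, ∀ x ∈ M i, x ^ p = 1 := by
  by_cases htriv : ∃ i, ∃ x ∈ M i, x ≠ 1
  swap
  · push Not at htriv
    exact ⟨2, Nat.prime_two, fun i x hx => by simp [htriv i x hx]⟩
  obtain ⟨i, x, hx, hx1⟩ := htriv
  set p := (orderOf x).minFac
  have hp : p.Prime := Nat.minFac_prime (mt orderOf_eq_one_iff.mp hx1)
  have hxp : orderOf (x ^ (orderOf x / p)) = p :=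
    orderOf_pow_orderOf_div (orderOf_pos x).ne' (Nat.minFac_dvd _)
  have hord : ∀ j, ∀ y ∈ M j, y ≠ 1 → orderOf y = p := fun j y hy hy1 =>
    hxp ▸ h j i y hy _ (pow_mem hx _) hy1
      (fun h1 => hp.ne_one (hxp ▸ orderOf_eq_one_iff.mpr h1))
  refine ⟨p, hp, fun j y hy => ?_⟩
  by_cases hy1 : y = 1
  · simp [hy1]
  · rw [← hord j y hy hy1]
    exact pow_orderOf_eq_one y

theorem Subgroup.nonempty_mulEquiv_of_image_conj_eq {H K : Subgroup G} {g : G}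
    (h : (fun m => g * m * g⁻¹) '' (H : Set G) = K) : Nonempty (H ≃* K) := by
  have hmap : H.map (MulAut.conj g).toMonoidHom = K :=
    SetLike.coe_injective (by rw [Subgroup.coe_map]; exact h)
  exact ⟨(H.equivMapOfInjective _ (MulAut.conj g).injective).trans (MulEquiv.subgroupCongr hmap)⟩

end Group

section Regular

variable {V : Type*} {N : Subgroup (Equiv.Perm V)} {v : V}

theorem injOn_apply_of_existsUnique (h : ∃! n : Equiv.Perm V, n ∈ N ∧ n v = v) :
    Set.InjOn (fun m : Equiv.Perm V => m v) N := by
  intro a ha b hb hab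
  have hba : b⁻¹ * a = 1 := h.unique
    ⟨mul_mem (inv_mem hb) ha, Equiv.Perm.inv_eq_iff_eq.mpr hab⟩ ⟨one_mem N, rfl⟩
  exact (inv_mul_eq_one.mp hba).symm

theorem image_apply_image_apply_eq_of_mem {H : Subgroup (Equiv.Perm V)} {m : Equiv.Perm V}
    (hm : m ∈ H) :
    (fun x => m x) '' ((fun n : Equiv.Perm V => n v) '' (H : Set (Equiv.Perm V))) =
      (fun n : Equiv.Perm V => n v) '' (H : Set (Equiv.Perm V)) := by
  rw [Set.image_image]
  ext x
  constructor
  · rintro ⟨n, hn, rfl⟩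
    exact ⟨m * n, mul_mem hm hn, rfl⟩
  · rintro ⟨n, hn, rfl⟩
    exact ⟨m⁻¹ * n, mul_mem (inv_mem hm) hn, by simp⟩

end Regular

section Blocks

variable {V ι : Type*} {Γ : SimpleGraph V} {B : Set V} {G N : Subgroup (Equiv.Perm V)} {v : V}

theorem adj_apply_of_neighborSet_eq {H : Subgroup (Equiv.Perm V)} {b : V}
    (hb : Γ.neighborSet b = (fun m : Equiv.Perm V => m v) '' (H : Set (Equiv.Perm V)))
    {x : Equiv.Perm V} (hx : x ∈ H) : Γ.Adj b (x v) := by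
  rw [← SimpleGraph.mem_neighborSet, hb]
  exact ⟨x, hx, rfl⟩

theorem image_conj_eq_of_image_image_apply_eq (hinj : Set.InjOn (fun m : Equiv.Perm V => m v) N)
    {H K : Subgroup (Equiv.Perm V)} (hH : H ≤ N) (hK : K ≤ N) {k : Equiv.Perm V}
    (hk : ∀ n ∈ N, k * n * k⁻¹ ∈ N) (hkv : k v = v)
    (h : (fun x => k x) '' ((fun m : Equiv.Perm V => m v) '' (H : Set (Equiv.Perm V))) =
      (fun m : Equiv.Perm V => m v) '' (K : Set (Equiv.Perm V))) :
    (fun m => k * m * k⁻¹) '' (H : Set (Equiv.Perm V)) = K := by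
  have hkv' : k.symm v = v := k.symm_apply_eq.mpr hkv.symm
  rw [Set.image_image, show (fun m : Equiv.Perm V => k (m v)) = fun m => (k * m * k⁻¹) v by
    simp [hkv'], ← Set.image_image (fun m : Equiv.Perm V => m v)] at h
  refine (hinj.image_eq_image_iff ?_ hK).mp h
  rintro _ ⟨m, hm, rfl⟩
  exact hk m (hH hm)

variable {M : ι → Subgroup (Equiv.Perm V)} {b : ι → V}

theorem exists_fix_image_conj_eq_and_image_conj_eq (hbip : IsBipartition Γ B)
    (hGaut : ∀ g ∈ G, IsGraphAut Γ g) (hNG : N ≤ G) (hnorm : ∀ g ∈ G, ∀ n ∈ N, g * n * g⁻¹ ∈ N)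
    {s : ℕ} (hldt : LocallyDistTrans Γ G s) (hs : 2 ≤ s)
    (hinj : Set.InjOn (fun m : Equiv.Perm V => m v) N)
    (hMinj : Function.Injective M) (hMN : ∀ i, M i ≤ N)
    (hb : ∀ i, Γ.neighborSet (b i) = (fun m : Equiv.Perm V => m v) '' (M i : Set (Equiv.Perm V)))
    {i j i' j' : ι} (hij : i ≠ j) (hij' : i' ≠ j') :
    ∃ g ∈ G, g v = v ∧
      (fun m => g * m * g⁻¹) '' (M i : Set (Equiv.Perm V)) = M i' ∧
      (fun m => g * m * g⁻¹) '' (M j : Set (Equiv.Perm V)) = M j' := by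
  set P : ι → Set V := fun i => (fun m : Equiv.Perm V => m v) '' (M i : Set (Equiv.Perm V))
  have hbinj : Function.Injective b := fun i j h => hMinj <| SetLike.coe_injective <|
    (hinj.image_eq_image_iff (hMN i) (hMN j)).mp (by rw [← hb, ← hb, h])
  have hadj : ∀ i, Γ.Adj v (b i) := fun i => (adj_apply_of_neighborSet_eq (hb i) (one_mem _)).symm
  obtain ⟨k, hkG, hki, hkj⟩ := hldt.exists_apply_eq_apply_eq hs hbip hGaut (hadj i) (hadj j)
    (hadj i') (hadj j') (hbinj.ne hij) (hbinj.ne hij')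
  have hkP : ∀ {a a'}, k (b a) = b a' → (fun x => k x) '' P a = P a' := fun h => by
    simp only [P, ← hb, (hGaut k hkG).image_neighborSet, h]
  obtain ⟨m, hm, hmv⟩ : k v ∈ P i' := hkP hki ▸ ⟨v, ⟨1, one_mem _, rfl⟩, rfl⟩
  obtain ⟨m', hm', hm'v⟩ : k v ∈ P j' := hkP hkj ▸ ⟨v, ⟨1, one_mem _, rfl⟩, rfl⟩
  obtain rfl : m = m' := hinj (hMN i' hm) (hMN j' hm') (hmv.trans hm'v.symm)
  have hgG : m⁻¹ * k ∈ G := mul_mem (inv_mem (hNG (hMN i' hm))) hkG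
  have hgv : (m⁻¹ * k) v = v := Equiv.Perm.inv_eq_iff_eq.mpr hmv.symm
  have hgP : ∀ {a a'}, k (b a) = b a' → m ∈ M a' → (fun x => (m⁻¹ * k) x) '' P a = P a' :=
    fun h hma => by
      rw [show (fun x => (m⁻¹ * k) x) = (fun x => m⁻¹ x) ∘ (fun x => k x) from rfl,
        Set.image_comp, hkP h, image_apply_image_apply_eq_of_mem (inv_mem hma)]
  exact ⟨m⁻¹ * k, hgG, hgv,
    image_conj_eq_of_image_image_apply_eq hinj (hMN i) (hMN i') (hnorm _ hgG) hgv (hgP hki hm),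
    image_conj_eq_of_image_image_apply_eq hinj (hMN j) (hMN j') (hnorm _ hgG) hgv (hgP hkj hm')⟩

theorem exists_conj_eq_of_ne_one (hbip : IsBipartition Γ B)
    (hnorm : ∀ g ∈ G, ∀ n ∈ N, g * n * g⁻¹ ∈ N) {s : ℕ} (hldt : LocallyDistTrans Γ G s)
    (hs : 2 ≤ s) (hinj : Set.InjOn (fun m : Equiv.Perm V => m v) N) (hMN : ∀ i, M i ≤ N)
    (hb : ∀ i, Γ.neighborSet (b i) = (fun m : Equiv.Perm V => m v) '' (M i : Set (Equiv.Perm V)))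
    {i j : ι} {x y : Equiv.Perm V} (hx : x ∈ M i) (hy : y ∈ M j) (hx1 : x ≠ 1) (hy1 : y ≠ 1) :
    ∃ g ∈ G, g * x * g⁻¹ = y := by
  have hdist : ∀ {a} {z : Equiv.Perm V}, z ∈ M a → z ≠ 1 → Γ.dist v (z v) = 2 :=
    fun hz hz1 => hbip.dist_eq_two_s18 (fun h => hz1 (hinj (one_mem N) (hMN _ hz) h).symm)
      (adj_apply_of_neighborSet_eq (hb _) (one_mem _)).symm (adj_apply_of_neighborSet_eq (hb _) hz)
  obtain ⟨g, hgG, hgv, hgx⟩ := hldt.2 v (x v) (y v) 2 one_le_two hs (hdist hx hx1) (hdist hy hy1)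
  refine ⟨g, hgG, hinj (hnorm g hgG x (hMN i hx)) (hMN j hy) ?_⟩
  simp [g.symm_apply_eq.mpr hgv.symm, hgx]

end Blocks

theorem statement18_general {V : Type*} [Fintype V] (Γ : SimpleGraph V) (B : Set V)
    (hbip : IsBipartition Γ B)
    (G N : Subgroup (Equiv.Perm V)) (hGaut : ∀ g ∈ G, IsGraphAut Γ g)
    (hNG : N ≤ G) (hnorm : ∀ g ∈ G, ∀ n ∈ N, g * n * g⁻¹ ∈ N)
    (r : ℕ)
    (hldt : LocallyDistTrans Γ G 4)
    (hreg : ∀ x ∈ B, ∀ y ∈ B, ∃! n : Equiv.Perm V, n ∈ N ∧ n x = y)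
    (v : V) (hv : v ∈ B)
    (M : Fin r → Subgroup (Equiv.Perm V)) (hMinj : Function.Injective M)
    (hMN : ∀ i, M i ≤ N)
    (hcosets : ∀ i : Fin r, ∀ n ∈ N, ∃ b ∈ Bᶜ,
      Γ.neighborSet b = (fun m : Equiv.Perm V => (n * m) v) '' (M i : Set (Equiv.Perm V))) :
    -- G_v is 2-transitive by conjugation on {M₁, …, M_r}
    (∀ i j i' j' : Fin r, i ≠ j → i' ≠ j' → ∃ g ∈ G, g v = v ∧
      (fun m : Equiv.Perm V => g * m * g⁻¹) '' (M i : Set (Equiv.Perm V))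
        = (M i' : Set (Equiv.Perm V)) ∧
      (fun m : Equiv.Perm V => g * m * g⁻¹) '' (M j : Set (Equiv.Perm V))
        = (M j' : Set (Equiv.Perm V))) ∧
    -- the Mᵢ are pairwise isomorphic p-groups of exponent p
    (∃ p : ℕ, p.Prime ∧
      (∀ i, IsPGroup p ↥(M i)) ∧
      (∀ i, ∀ m ∈ M i, m ^ p = 1) ∧
      (∀ i j, Nonempty (↥(M i) ≃* ↥(M j)))) := by
  have hinj := injOn_apply_of_existsUnique (hreg v hv v hv)
  have hblock : ∀ i, ∃ b, Γ.neighborSet b =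
      (fun m : Equiv.Perm V => m v) '' (M i : Set (Equiv.Perm V)) := fun i => by
    obtain ⟨b, -, hb⟩ := hcosets i 1 N.one_mem
    exact ⟨b, by simpa using hb⟩
  choose b hb using hblock
  have htwo : ∀ i j i' j' : Fin r, i ≠ j → i' ≠ j' → _ := fun i j i' j' hij hij' =>
    exists_fix_image_conj_eq_and_image_conj_eq hbip hGaut hNG hnorm hldt (by norm_num) hinj
      hMinj hMN hb hij hij'
  obtain ⟨p, hp, hexp⟩ := exists_prime_forall_pow_eq_one M fun i j x hx y hy hx1 hy1 => by
    obtain ⟨g, -, rfl⟩ :=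
      exists_conj_eq_of_ne_one hbip hnorm hldt (by norm_num) hinj hMN hb hx hy hx1 hy1
    exact ((MulAut.conj g).orderOf_eq x).symm
  refine ⟨htwo, p, hp, fun i x => ⟨1, Subtype.ext (by simpa using hexp i x x.2)⟩, hexp,
    fun i j => ?_⟩
  rcases eq_or_ne i j with rfl | hij
  · exact ⟨MulEquiv.refl _⟩
  · obtain ⟨g, -, -, hg, -⟩ := htwo i j j i hij hij.symm
    exact Subgroup.nonempty_mulEquiv_of_image_conj_eq hg

/-- **Lemma `lem:pgroups`**.  In the situation of Lemma `lem:subgpsN` (blocks of `D(Γ)`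
identified with the cosets of subgroups `M₁, …, M_r` of the regular normal subgroup
`N`), the stabiliser `G_v` acts `2`-transitively by conjugation on `{M₁, …, M_r}`, and
there is a prime `p` such that the `Mᵢ` are pairwise isomorphic `p`-groups of exponent
`p`. -/
theorem statement18 {V : Type*} [Fintype V] (Γ : SimpleGraph V) (B : Set V)
    (hconn : Γ.Connected) (hbip : IsBipartition Γ B)
    (G N : Subgroup (Equiv.Perm V)) (hGaut : ∀ g ∈ G, IsGraphAut Γ g)
    (hNG : N ≤ G) (hN1 : N ≠ ⊥) (hnorm : ∀ g ∈ G, ∀ n ∈ N, g * n * g⁻¹ ∈ N)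
    (r : ℕ) (hr : 3 ≤ r)
    (hstar : IsStarlike Γ B N r) (hldt : LocallyDistTrans Γ G 4)
    (hreg : ∀ x ∈ B, ∀ y ∈ B, ∃! n : Equiv.Perm V, n ∈ N ∧ n x = y)
    (v : V) (hv : v ∈ B)
    (M : Fin r → Subgroup (Equiv.Perm V)) (hMinj : Function.Injective M)
    (hMN : ∀ i, M i ≤ N)
    (hblocks : ∀ b ∈ Bᶜ, ∃ (i : Fin r), ∃ n ∈ N,
      Γ.neighborSet b = (fun m : Equiv.Perm V => (n * m) v) '' (M i : Set (Equiv.Perm V)))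
    (hcosets : ∀ i : Fin r, ∀ n ∈ N, ∃ b ∈ Bᶜ,
      Γ.neighborSet b = (fun m : Equiv.Perm V => (n * m) v) '' (M i : Set (Equiv.Perm V))) :
    -- G_v is 2-transitive by conjugation on {M₁, …, M_r}
    (∀ i j i' j' : Fin r, i ≠ j → i' ≠ j' → ∃ g ∈ G, g v = v ∧
      (fun m : Equiv.Perm V => g * m * g⁻¹) '' (M i : Set (Equiv.Perm V))
        = (M i' : Set (Equiv.Perm V)) ∧
      (fun m : Equiv.Perm V => g * m * g⁻¹) '' (M j : Set (Equiv.Perm V))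
        = (M j' : Set (Equiv.Perm V))) ∧
    -- the Mᵢ are pairwise isomorphic p-groups of exponent p
    (∃ p : ℕ, p.Prime ∧
      (∀ i, IsPGroup p ↥(M i)) ∧
      (∀ i, ∀ m ∈ M i, m ^ p = 1) ∧
      (∀ i j, Nonempty (↥(M i) ≃* ↥(M j)))) :=
  statement18_general Γ B hbip G N hGaut hNG hnorm r hldt hreg v hv M hMinj hMN hcosets
end

section
/- Let Γ be a finite connected bipartite graph with ordered bipartition (B|B'), G ≤ Aut(Γ), 1 ≠ N ⊴ G, and r ≥ 3 an integer, such that Γ is r-starlike relative to N and locally (G,4)-distance transitive, and suppose N acts regularly on B; identify B with N via a base point v as above, and let M_1, …, M_r be the subgroups of N whose right cosets are the blocks of the adjacency design D(Γ). Then N = M_1·M_2; in particular N is a p-group (for the prime p such that the M_i are p-groups) and |N| ≤ |M_1|². -/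
open SimpleGraph

/-!
Call `i` the type of a block `n M_i v`. Local `1`-transitivity at `v` conjugates the `M_i` into
each other, so they have equal orders and none contains another. For a block `b = n M_i v` and
`m ∈ M_j \ M_i`, the translate `(n m n⁻¹) b` lies at distance `4` from `b` (through `n v`,
`n M_j v`, `n m v`); since `G_b` normalises `N` and is transitive on `Γ₄(b)`, every block at
distance `4` from `b` is an `N`-translate of `b`, hence has the same type.

Blocks at distance `6` are then impossible: on a geodesic `b = x₀, …, x₆ = c`, a block `f`
through `x₁` of a type different from those of `b` and `c` is at distance at least `5` from `c`,
so at distance exactly `4` from `x₄`, forcing `f`, `x₄` and `b` to share a type. Hence blocks of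
different types are at distance `2`: `M_1 v` meets `n M_2 v` for every `n ∈ N`, which is
`N = M_1 M_2`. Counting `M_1 M_2` modulo `M_2` gives the order statements.
-/

open scoped Pointwise

namespace SimpleGraph

variable {V : Type*} {Γ : SimpleGraph V} {u v : V}

lemma Walk.dist_getVert_le (w : Γ.Walk u v) {i j : ℕ} (hij : i ≤ j) :
    Γ.dist (w.getVert i) (w.getVert j) ≤ j - i := by
  calc Γ.dist (w.getVert i) (w.getVert j)
      = Γ.dist (w.getVert i) ((w.drop i).getVert (j - i)) := by
        rw [Walk.drop_getVert, Nat.add_sub_cancel' hij]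
    _ ≤ ((w.drop i).take (j - i)).length := dist_le _
    _ ≤ j - i := by simp [Walk.take_length]

lemma Connected.exists_dist_eq (hconn : Γ.Connected) {k : ℕ} (hk : k ≤ Γ.dist u v) :
    ∃ y, Γ.dist u y = k := by
  obtain ⟨w, hw⟩ := hconn.exists_walk_length_eq_dist u v
  refine ⟨w.getVert k, le_antisymm ?_ ?_⟩
  · simpa using w.dist_getVert_le (Nat.zero_le k)
  · have h := w.dist_getVert_le (hk.trans hw.ge)
    rw [w.getVert_length] at h
    have := hconn.dist_triangle (u := u) (v := w.getVert k) (w := v)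
    omega

lemma exists_adj_adj_of_dist_eq_two (h : Γ.dist u v = 2) : ∃ x, Γ.Adj u x ∧ Γ.Adj x v := by
  obtain ⟨w, hw⟩ := exists_walk_of_dist_ne_zero (h ▸ two_ne_zero)
  have h2 : w.getVert 2 = v := by simpa [hw, h] using w.getVert_length
  refine ⟨w.getVert 1, by simpa using w.adj_getVert_succ (i := 0) (by omega), ?_⟩
  simpa [h2] using w.adj_getVert_succ (i := 1) (by omega)

end SimpleGraph

namespace IsBipartition

variable {V : Type*} {Γ : SimpleGraph V} {B : Set V}

open Classical in
noncomputable def coloring (hbip : IsBipartition Γ B) : Γ.Coloring Bool :=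
  Coloring.mk (fun x => decide (x ∈ B)) fun {x y} hxy h => by
    have := hbip x y hxy
    have := decide_eq_decide.mp h
    tauto

lemma even_dist_iff_s19 (hbip : IsBipartition Γ B) (hconn : Γ.Connected) (x y : V) :
    Even (Γ.dist x y) ↔ (x ∈ B ↔ y ∈ B) := by
  obtain ⟨w, hw⟩ := hconn.exists_walk_length_eq_dist x y
  simpa [coloring, Coloring.mk, hw] using hbip.coloring.even_length_iff_congr w

end IsBipartition

lemma IsGraphAut.neighborSet_apply {V : Type*} {Γ : SimpleGraph V} {g : Equiv.Perm V}
    (hg : IsGraphAut Γ g) (b : V) :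
    Γ.neighborSet (g b) = (fun z => g z) '' Γ.neighborSet b := by
  ext x
  obtain ⟨y, rfl⟩ := g.surjective x
  simp only [mem_neighborSet, hg b y, g.injective.mem_set_image]

lemma IsPGroup.of_coe_mul_eq {p : ℕ} [Fact p.Prime] {G : Type*} [Group G] [Finite G]
    {H K L : Subgroup G} (hH : IsPGroup p H) (hK : IsPGroup p K)
    (hL : (H : Set G) * K = L) : IsPGroup p L := by
  have horbit : MulAction.orbit H (↑(1 : G) : G ⧸ K) = ((↑) : G → G ⧸ K) '' H := by
    ext q
    constructor
    · rintro ⟨⟨a, ha⟩, rfl⟩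
      exact ⟨a, ha, congrArg _ (mul_one a).symm⟩
    · rintro ⟨a, ha, rfl⟩
      exact ⟨⟨a, ha⟩, congrArg _ (mul_one a)⟩
  obtain ⟨a, ha⟩ := hK.exists_card_eq
  obtain ⟨b, hb⟩ := hH.card_orbit (↑(1 : G) : G ⧸ K)
  refine IsPGroup.of_card (n := a + b) ?_
  rw [pow_add, ← ha, ← hb, horbit, ← Subgroup.card_mul_eq_card_subgroup_mul_card_quotient, hL]
  rfl

section BlockTypes

variable {V ι : Type*} {Γ : SimpleGraph V} {B : Set V}

lemma dist_ne_six_of_types (hconn : Γ.Connected) (hbip : IsBipartition Γ B) (τ : V → ι)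
    (hτ : ∀ b ∉ B, ∀ c ∉ B, Γ.dist b c = 4 → τ b = τ c)
    (hcover : ∀ x ∈ B, ∀ t, ∃ b, Γ.Adj x b ∧ τ b = t)
    (hthree : ∀ i j : ι, ∃ t, t ≠ i ∧ t ≠ j) {b c : V} (hb : b ∉ B) (hc : c ∉ B) :
    Γ.dist b c ≠ 6 := by
  intro h6
  have hpar := hbip.even_dist_iff_s19 hconn
  obtain ⟨w, hw⟩ := hconn.exists_walk_length_eq_dist b c
  set x₁ := w.getVert 1
  set x₄ := w.getVert 4
  have hbx₁ : Γ.Adj b x₁ := by simpa using w.adj_getVert_succ (i := 0) (by omega)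
  have hx₁ : x₁ ∈ B := by have := hbip _ _ hbx₁; tauto
  have hbx₄ : Γ.dist b x₄ ≤ 4 := by
    simpa using w.dist_getVert_le (i := 0) (j := 4) (by omega)
  have hx₁x₄ : Γ.dist x₁ x₄ ≤ 3 := w.dist_getVert_le (by omega)
  have hx₄c : Γ.dist x₄ c ≤ 2 := by
    have h := w.dist_getVert_le (i := 4) (j := w.length) (by omega)
    rwa [w.getVert_length, hw, h6] at h
  have hbx₄' : Γ.dist b x₄ = 4 := by
    have := hconn.dist_triangle (u := b) (v := x₄) (w := c)
    omega
  have hx₄ : x₄ ∉ B := by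
    have := (hpar b x₄).mp (by rw [hbx₄']; decide)
    tauto
  obtain ⟨t, htb, htc⟩ := hthree (τ b) (τ c)
  obtain ⟨f, hx₁f, rfl⟩ := hcover x₁ hx₁ t
  have hf : f ∉ B := by have := hbip _ _ hx₁f; tauto
  have hfx₄ : Γ.dist f x₄ = 4 := by
    have hbf : Γ.dist b f ≤ 2 := dist_le (.cons hbx₁ (.cons hx₁f .nil))
    have hfc : Γ.dist f c ≠ 4 := fun h => htc (hτ f hf c hc h)
    have hfx₁ : Γ.dist f x₁ = 1 := dist_eq_one_iff_adj.mpr hx₁f.symm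
    have := hconn.dist_triangle (u := b) (v := f) (w := c)
    have := hconn.dist_triangle (u := f) (v := x₄) (w := c)
    have := hconn.dist_triangle (u := f) (v := x₁) (w := x₄)
    obtain ⟨k, hk⟩ := (hpar f x₄).mpr (by tauto)
    omega
  exact htb ((hτ f hf x₄ hx₄ hfx₄).trans (hτ b hb x₄ hx₄ hbx₄').symm)

lemma dist_eq_two_of_types_ne (hconn : Γ.Connected) (hbip : IsBipartition Γ B) (τ : V → ι)
    (hτ : ∀ b ∉ B, ∀ c ∉ B, Γ.dist b c = 4 → τ b = τ c)
    (hcover : ∀ x ∈ B, ∀ t, ∃ b, Γ.Adj x b ∧ τ b = t)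
    (hthree : ∀ i j : ι, ∃ t, t ≠ i ∧ t ≠ j) {b c : V} (hb : b ∉ B) (hc : c ∉ B)
    (hbc : τ b ≠ τ c) : Γ.dist b c = 2 := by
  have hpar := hbip.even_dist_iff_s19 hconn
  have h0 : Γ.dist b c ≠ 0 := fun h => hbc (congrArg τ (hconn.dist_eq_zero_iff.mp h))
  have h4 : Γ.dist b c ≠ 4 := fun h => hbc (hτ b hb c hc h)
  have h6 : ¬ 6 ≤ Γ.dist b c := by
    intro h
    obtain ⟨y, hy⟩ := hconn.exists_dist_eq h
    have hy' : y ∉ B := by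
      have := (hpar b y).mp (by rw [hy]; decide)
      tauto
    exact dist_ne_six_of_types hconn hbip τ hτ hcover hthree hb hy' hy
  obtain ⟨k, hk⟩ := (hpar b c).mpr (by tauto)
  omega

end BlockTypes

section Cosets

variable {V : Type*} {v : V} {N K L : Subgroup (Equiv.Perm V)} {n n' g : Equiv.Perm V}

/-- The block of `D(Γ)` attached to the coset `n K`. The paper's right coset `M_i n` is `n K`
here because `Equiv.Perm` multiplies by composition. -/
def cosetPoints (v : V) (K : Subgroup (Equiv.Perm V)) (n : Equiv.Perm V) : Set V :=
  (fun m : Equiv.Perm V => (n * m) v) '' (K : Set (Equiv.Perm V))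

lemma mul_apply_mem_cosetPoints {m : Equiv.Perm V} (hm : m ∈ K) (n : Equiv.Perm V) :
    (n * m) v ∈ cosetPoints v K n :=
  ⟨m, hm, rfl⟩

lemma apply_mem_cosetPoints (n : Equiv.Perm V) : n v ∈ cosetPoints v K n :=
  ⟨1, K.one_mem, by simp⟩

lemma image_cosetPoints (k n : Equiv.Perm V) :
    (fun z => k z) '' cosetPoints v K n = cosetPoints v K (k * n) := by
  simp only [cosetPoints, Set.image_image, mul_assoc, Equiv.Perm.mul_apply]

lemma image_cosetPoints_one_of_apply_eq (hg : g v = v) :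
    (fun z => g z) '' cosetPoints v K 1 = cosetPoints v (K.map (MulAut.conj g).toMonoidHom) 1 := by
  have hg' : g.symm v = v := g.symm_apply_eq.mpr hg.symm
  simp [cosetPoints, Set.image_image, hg']

lemma apply_mem_cosetPoints_iff (hfree : ∀ k ∈ N, k v = v → k = 1) (hK : K ≤ N) (hn : n ∈ N)
    (hg : g ∈ N) : g v ∈ cosetPoints v K n ↔ n⁻¹ * g ∈ K := by
  refine ⟨?_, fun h => ⟨n⁻¹ * g, h, by simp⟩⟩
  rintro ⟨m, hm, hmg⟩
  have h1 : (n * m)⁻¹ * g = 1 :=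
    hfree _ (N.mul_mem (N.inv_mem (N.mul_mem hn (hK hm))) hg)
      (by rw [Equiv.Perm.mul_apply, Equiv.Perm.inv_eq_iff_eq]; exact hmg.symm)
  rw [← inv_mul_eq_one.mp h1, inv_mul_cancel_left]
  exact hm

lemma le_of_cosetPoints_subset (hfree : ∀ k ∈ N, k v = v → k = 1) (hK : K ≤ N) (hL : L ≤ N)
    (hn : n ∈ N) (hn' : n' ∈ N) (h : cosetPoints v K n ⊆ cosetPoints v L n') : K ≤ L := by
  have key : ∀ a ∈ K, n'⁻¹ * (n * a) ∈ L := fun a ha =>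
    (apply_mem_cosetPoints_iff hfree hL hn' (N.mul_mem hn (hK ha))).mp
      (h (mul_apply_mem_cosetPoints ha n))
  intro a ha
  have ha' := L.mul_mem (L.inv_mem (key 1 K.one_mem)) (key a ha)
  rwa [show (n'⁻¹ * (n * 1))⁻¹ * (n'⁻¹ * (n * a)) = a by group] at ha'

lemma eq_of_cosetPoints_eq (hfree : ∀ k ∈ N, k v = v → k = 1) (hK : K ≤ N) (hL : L ≤ N)
    (hn : n ∈ N) (hn' : n' ∈ N) (h : cosetPoints v K n = cosetPoints v L n') : K = L :=
  le_antisymm (le_of_cosetPoints_subset hfree hK hL hn hn' h.subset)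
    (le_of_cosetPoints_subset hfree hL hK hn' hn h.symm.subset)

lemma exists_mul_eq_of_mem_cosetPoints (hfree : ∀ k ∈ N, k v = v → k = 1) (hK : K ≤ N)
    (hL : L ≤ N) (hn : n ∈ N) (hn' : n' ∈ N) {x : V} (hxK : x ∈ cosetPoints v K n)
    (hxL : x ∈ cosetPoints v L n') : ∃ a ∈ K, ∃ b ∈ L, n⁻¹ * n' = a * b := by
  obtain ⟨a, ha, rfl⟩ := hxK
  have hb := (apply_mem_cosetPoints_iff hfree hL hn' (N.mul_mem hn (hK ha))).mp hxL
  exact ⟨a, ha, _, L.inv_mem hb, by group⟩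

end Cosets

section Blocks

variable {V : Type*} {Γ : SimpleGraph V} {B : Set V} {G N K K' L : Subgroup (Equiv.Perm V)}
  {v b c : V} {n n' : Equiv.Perm V}

lemma IsGraphAut.neighborSet_apply_eq_cosetPoints {k : Equiv.Perm V} (hk : IsGraphAut Γ k)
    (hb : Γ.neighborSet b = cosetPoints v K n) :
    Γ.neighborSet (k b) = cosetPoints v K (k * n) := by
  rw [hk.neighborSet_apply, hb, image_cosetPoints]

lemma exists_dist_apply_eq_four (hconn : Γ.Connected) (hbip : IsBipartition Γ B)
    (hNaut : ∀ k ∈ N, IsGraphAut Γ k) (hNB : ∀ k ∈ N, ∀ x, k x ∈ B ↔ x ∈ B)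
    (hfree : ∀ k ∈ N, k v = v → k = 1) (hK : K ≤ N) (hL : L ≤ N) {m : Equiv.Perm V}
    (hmL : m ∈ L) (hmK : m ∉ K) {d : V} (hn : n ∈ N) (hb : b ∉ B)
    (hbn : Γ.neighborSet b = cosetPoints v K n) (hdn : Γ.neighborSet d = cosetPoints v L n) :
    ∃ k ∈ N, Γ.dist b (k b) = 4 := by
  have hnm : n * m ∈ N := N.mul_mem hn (hL hmL)
  have hk : n * m * n⁻¹ ∈ N := N.mul_mem hnm (N.inv_mem hn)
  refine ⟨_, hk, ?_⟩
  set b' := (n * m * n⁻¹) b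
  have hb'n : Γ.neighborSet b' = cosetPoints v K (n * m) := by
    rw [(hNaut _ hk).neighborSet_apply_eq_cosetPoints hbn, inv_mul_cancel_right]
  -- `n K` and `n m K` are distinct cosets since `m ∉ K`, so `b` and `b'` share no point
  have hdisj : ∀ x, Γ.Adj b x → ¬ Γ.Adj b' x := by
    intro x hbx hb'x
    rw [← mem_neighborSet, hbn] at hbx
    rw [← mem_neighborSet, hb'n] at hb'x
    obtain ⟨a, ha, a', ha', h⟩ := exists_mul_eq_of_mem_cosetPoints hfree hK hK hn hnm hbx hb'x
    rw [inv_mul_cancel_left] at h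
    exact hmK (h ▸ K.mul_mem ha ha')
  have hbnv : Γ.Adj b (n v) := by rw [← mem_neighborSet, hbn]; exact apply_mem_cosetPoints n
  have hle : Γ.dist b b' ≤ 4 := by
    have h1 : Γ.Adj d (n v) := by rw [← mem_neighborSet, hdn]; exact apply_mem_cosetPoints n
    have h2 : Γ.Adj d ((n * m) v) := by
      rw [← mem_neighborSet, hdn]; exact mul_apply_mem_cosetPoints hmL n
    have h3 : Γ.Adj b' ((n * m) v) := by
      rw [← mem_neighborSet, hb'n]; exact apply_mem_cosetPoints _
    exact dist_le (.cons hbnv (.cons h1.symm (.cons h2 (.cons h3.symm .nil))))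
  have h0 : Γ.dist b b' ≠ 0 := fun h =>
    hdisj _ hbnv (hconn.dist_eq_zero_iff.mp h ▸ hbnv)
  have h2 : Γ.dist b b' ≠ 2 := fun h => by
    obtain ⟨x, hbx, hxb'⟩ := exists_adj_adj_of_dist_eq_two h
    exact hdisj x hbx hxb'.symm
  have hb' : b' ∉ B := by rwa [hNB _ hk]
  obtain ⟨j, hj⟩ := (hbip.even_dist_iff_s19 hconn b b').mpr (by tauto)
  omega

lemma LocallyDistTrans.exists_mem_apply_eq {s i : ℕ} (hldt : LocallyDistTrans Γ G s)
    (hnorm : ∀ g ∈ G, ∀ k ∈ N, g * k * g⁻¹ ∈ N) (hi : 1 ≤ i) (his : i ≤ s)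
    {k : Equiv.Perm V} (hk : k ∈ N) (hbk : Γ.dist b (k b) = i) (hbc : Γ.dist b c = i) :
    ∃ k' ∈ N, k' b = c := by
  obtain ⟨g, hg, hgb, hgc⟩ := hldt.2 b (k b) c i hi his hbk hbc
  refine ⟨g * k * g⁻¹, hnorm g hg k hk, ?_⟩
  have hgb' : g.symm b = b := g.symm_apply_eq.mpr hgb.symm
  simp [hgb', hgc]

lemma eq_of_dist_eq_four (hconn : Γ.Connected) (hbip : IsBipartition Γ B)
    (hNaut : ∀ k ∈ N, IsGraphAut Γ k) (hNB : ∀ k ∈ N, ∀ x, k x ∈ B ↔ x ∈ B)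
    (hfree : ∀ k ∈ N, k v = v → k = 1) (hldt : LocallyDistTrans Γ G 4)
    (hnorm : ∀ g ∈ G, ∀ k ∈ N, g * k * g⁻¹ ∈ N) (hK : K ≤ N) (hK' : K' ≤ N) (hL : L ≤ N)
    {m : Equiv.Perm V} (hmL : m ∈ L) (hmK : m ∉ K) {d : V} (hn : n ∈ N) (hn' : n' ∈ N)
    (hb : b ∉ B) (hbn : Γ.neighborSet b = cosetPoints v K n)
    (hcn : Γ.neighborSet c = cosetPoints v K' n') (hdn : Γ.neighborSet d = cosetPoints v L n)
    (hbc : Γ.dist b c = 4) : K = K' := by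
  obtain ⟨k, hk, hbk⟩ :=
    exists_dist_apply_eq_four hconn hbip hNaut hNB hfree hK hL hmL hmK hn hb hbn hdn
  obtain ⟨k', hk', rfl⟩ := hldt.exists_mem_apply_eq hnorm (by norm_num) le_rfl hk hbk hbc
  exact eq_of_cosetPoints_eq hfree hK hK' (N.mul_mem hk' hn) hn'
    (((hNaut k' hk').neighborSet_apply_eq_cosetPoints hbn).symm.trans hcn)

lemma map_conj_eq_of_apply_eq {g : Equiv.Perm V} (hfree : ∀ k ∈ N, k v = v → k = 1)
    (hg : IsGraphAut Γ g) (hgN : ∀ k ∈ N, g * k * g⁻¹ ∈ N) (hgv : g v = v) (hK : K ≤ N)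
    (hL : L ≤ N) (hb : Γ.neighborSet b = cosetPoints v K 1)
    (hgb : Γ.neighborSet (g b) = cosetPoints v L 1) :
    K.map (MulAut.conj g).toMonoidHom = L := by
  refine eq_of_cosetPoints_eq hfree ?_ hL N.one_mem N.one_mem ?_
  · rintro _ ⟨m, hm, rfl⟩
    exact hgN m (hK hm)
  · rw [← image_cosetPoints_one_of_apply_eq hgv, ← hb, ← hg.neighborSet_apply, hgb]

lemma card_eq_of_locallyDistTrans {s : ℕ} (hldt : LocallyDistTrans Γ G s) (hs : 1 ≤ s)
    (hGaut : ∀ g ∈ G, IsGraphAut Γ g) (hnorm : ∀ g ∈ G, ∀ k ∈ N, g * k * g⁻¹ ∈ N)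
    (hfree : ∀ k ∈ N, k v = v → k = 1) (hK : K ≤ N) (hL : L ≤ N)
    (hb : Γ.neighborSet b = cosetPoints v K 1) (hc : Γ.neighborSet c = cosetPoints v L 1) :
    Nat.card K = Nat.card L := by
  have hvb : Γ.dist v b = 1 := by
    rw [dist_eq_one_iff_adj, adj_comm, ← mem_neighborSet, hb]
    exact apply_mem_cosetPoints 1
  have hvc : Γ.dist v c = 1 := by
    rw [dist_eq_one_iff_adj, adj_comm, ← mem_neighborSet, hc]
    exact apply_mem_cosetPoints 1
  obtain ⟨g, hg, hgv, hgb⟩ := hldt.2 v b c 1 le_rfl hs hvb hvc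
  rw [← map_conj_eq_of_apply_eq hfree (hGaut g hg) (hnorm g hg) hgv hK hL hb (hgb ▸ hc)]
  exact (Subgroup.card_map_of_injective (MulAut.conj g).injective).symm

end Blocks

section Family

variable {V ι : Type*} {Γ : SimpleGraph V} {B : Set V} {G N : Subgroup (Equiv.Perm V)} {v : V}
  {M : ι → Subgroup (Equiv.Perm V)}

lemma index_eq_of_dist_eq_four [Finite V] [Nontrivial ι] (hconn : Γ.Connected)
    (hbip : IsBipartition Γ B) (hNaut : ∀ k ∈ N, IsGraphAut Γ k)
    (hNB : ∀ k ∈ N, ∀ x, k x ∈ B ↔ x ∈ B) (hfree : ∀ k ∈ N, k v = v → k = 1)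
    (hldt : LocallyDistTrans Γ G 4) (hnorm : ∀ g ∈ G, ∀ k ∈ N, g * k * g⁻¹ ∈ N)
    (hMinj : Function.Injective M) (hMN : ∀ i, M i ≤ N)
    (hcard : ∀ i j, Nat.card (M i) = Nat.card (M j))
    (hcosets : ∀ i, ∀ n ∈ N, ∃ d ∈ Bᶜ, Γ.neighborSet d = cosetPoints v (M i) n)
    {b c : V} {i j : ι} {n n' : Equiv.Perm V} (hn : n ∈ N) (hn' : n' ∈ N) (hb : b ∉ B)
    (hbn : Γ.neighborSet b = cosetPoints v (M i) n)
    (hcn : Γ.neighborSet c = cosetPoints v (M j) n') (hbc : Γ.dist b c = 4) : i = j := by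
  obtain ⟨l, hli⟩ := exists_ne i
  obtain ⟨m, hml, hmi⟩ : ∃ m ∈ M l, m ∉ M i := by
    by_contra! h
    exact hli (hMinj (Subgroup.eq_of_le_of_card_ge h (hcard i l).le))
  obtain ⟨d, -, hdn⟩ := hcosets l n hn
  exact hMinj (eq_of_dist_eq_four hconn hbip hNaut hNB hfree hldt hnorm (hMN i) (hMN j) (hMN l)
    hml hmi hn hn' hb hbn hcn hdn hbc)

lemma exists_mul_eq_of_ne [Finite V] (hconn : Γ.Connected) (hbip : IsBipartition Γ B)
    (hNaut : ∀ k ∈ N, IsGraphAut Γ k) (hNB : ∀ k ∈ N, ∀ x, k x ∈ B ↔ x ∈ B)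
    (htrans : ∀ x ∈ B, ∃ k ∈ N, k v = x) (hfree : ∀ k ∈ N, k v = v → k = 1)
    (hldt : LocallyDistTrans Γ G 4) (hnorm : ∀ g ∈ G, ∀ k ∈ N, g * k * g⁻¹ ∈ N)
    (hMinj : Function.Injective M) (hMN : ∀ i, M i ≤ N)
    (hcard : ∀ i j, Nat.card (M i) = Nat.card (M j))
    (hthree : ∀ i j : ι, ∃ t, t ≠ i ∧ t ≠ j)
    (hblocks : ∀ b ∈ Bᶜ, ∃ i, ∃ n ∈ N, Γ.neighborSet b = cosetPoints v (M i) n)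
    (hcosets : ∀ i, ∀ n ∈ N, ∃ d ∈ Bᶜ, Γ.neighborSet d = cosetPoints v (M i) n)
    {i j : ι} (hij : i ≠ j) {n : Equiv.Perm V} (hn : n ∈ N) :
    ∃ a ∈ M i, ∃ b ∈ M j, n = a * b := by
  have : Nontrivial ι := ⟨⟨i, j, hij⟩⟩
  have : Nonempty ι := ⟨i⟩
  choose! τ hτ using hblocks
  have hτ_eq :
      ∀ {b k n}, n ∈ N → b ∉ B → Γ.neighborSet b = cosetPoints v (M k) n → τ b = k := by
    intro b k n hn hb hbn
    obtain ⟨n', hn', hbn'⟩ := hτ b hb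
    exact hMinj (eq_of_cosetPoints_eq hfree (hMN _) (hMN _) hn' hn (hbn'.symm.trans hbn))
  have hτ4 : ∀ b ∉ B, ∀ c ∉ B, Γ.dist b c = 4 → τ b = τ c := by
    intro b hb c hc hbc
    obtain ⟨n₁, hn₁, hb₁⟩ := hτ b hb
    obtain ⟨n₂, hn₂, hc₂⟩ := hτ c hc
    exact index_eq_of_dist_eq_four hconn hbip hNaut hNB hfree hldt hnorm hMinj hMN hcard
      hcosets hn₁ hn₂ hb hb₁ hc₂ hbc
  have hcover : ∀ x ∈ B, ∀ t, ∃ b, Γ.Adj x b ∧ τ b = t := by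
    intro x hx t
    obtain ⟨k, hk, rfl⟩ := htrans x hx
    obtain ⟨d, hd, hdk⟩ := hcosets t k hk
    refine ⟨d, ?_, hτ_eq hk hd hdk⟩
    rw [adj_comm, ← mem_neighborSet, hdk]
    exact apply_mem_cosetPoints k
  obtain ⟨b, hb, hbn⟩ := hcosets i 1 N.one_mem
  obtain ⟨c, hc, hcn⟩ := hcosets j n hn
  have hbc := dist_eq_two_of_types_ne hconn hbip τ hτ4 hcover hthree hb hc
    (by rwa [hτ_eq N.one_mem hb hbn, hτ_eq hn hc hcn])
  obtain ⟨x, hbx, hxc⟩ := exists_adj_adj_of_dist_eq_two hbc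
  rw [← mem_neighborSet, hbn] at hbx
  rw [adj_comm, ← mem_neighborSet, hcn] at hxc
  obtain ⟨a, ha, a', ha', h⟩ :=
    exists_mul_eq_of_mem_cosetPoints hfree (hMN i) (hMN j) N.one_mem hn hbx hxc
  exact ⟨a, ha, a', ha', by simpa using h⟩

end Family

/-- **Lemma `lem:Npgroup`**.  In the situation of Lemma `lem:subgpsN` (blocks of `D(Γ)`
identified with the cosets of subgroups `M₁, …, M_r ≤ N`, which are `p`-groups), we have
`N = M₁ · M₂`; in particular `N` is a `p`-group and `|N| ≤ |M₁|²`. -/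
theorem statement19 {V : Type*} [Fintype V] (Γ : SimpleGraph V) (B : Set V)
    (hconn : Γ.Connected) (hbip : IsBipartition Γ B)
    (G N : Subgroup (Equiv.Perm V)) (hGaut : ∀ g ∈ G, IsGraphAut Γ g)
    (hNG : N ≤ G) (hnorm : ∀ g ∈ G, ∀ n ∈ N, g * n * g⁻¹ ∈ N)
    (r : ℕ) (hr : 3 ≤ r)
    (hstar : IsStarlike Γ B N r) (hldt : LocallyDistTrans Γ G 4)
    (hreg : ∀ x ∈ B, ∀ y ∈ B, ∃! n : Equiv.Perm V, n ∈ N ∧ n x = y)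
    (v : V) (hv : v ∈ B)
    (M : Fin r → Subgroup (Equiv.Perm V)) (hMinj : Function.Injective M)
    (hMN : ∀ i, M i ≤ N)
    (hblocks : ∀ b ∈ Bᶜ, ∃ (i : Fin r), ∃ n ∈ N,
      Γ.neighborSet b = (fun m : Equiv.Perm V => (n * m) v) '' (M i : Set (Equiv.Perm V)))
    (hcosets : ∀ i : Fin r, ∀ n ∈ N, ∃ b ∈ Bᶜ,
      Γ.neighborSet b = (fun m : Equiv.Perm V => (n * m) v) '' (M i : Set (Equiv.Perm V)))
    (p : ℕ) (hp : p.Prime) (hMp : ∀ i, IsPGroup p ↥(M i)) :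
    -- N = M₁ M₂
    (∀ n ∈ N, ∃ m₁ ∈ M ⟨0, by omega⟩, ∃ m₂ ∈ M ⟨1, by omega⟩, n = m₁ * m₂) ∧
    -- N is a p-group with |N| ≤ |M₁|²
    IsPGroup p ↥N ∧
    Nat.card ↥N ≤ Nat.card ↥(M ⟨0, by omega⟩) ^ 2 := by
  have hNaut : ∀ k ∈ N, IsGraphAut Γ k := fun k hk => hGaut k (hNG hk)
  have hfree : ∀ k ∈ N, k v = v → k = 1 := fun k hk hkv =>
    (hreg v hv v hv).unique ⟨hk, hkv⟩ ⟨N.one_mem, rfl⟩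
  have hcard : ∀ i j, Nat.card (M i) = Nat.card (M j) := by
    intro i j
    obtain ⟨b, -, hb⟩ := hcosets i 1 N.one_mem
    obtain ⟨c, -, hc⟩ := hcosets j 1 N.one_mem
    exact card_eq_of_locallyDistTrans hldt (by norm_num) hGaut hnorm hfree (hMN i) (hMN j) hb hc
  set M₀ := M ⟨0, by omega⟩
  set M₁ := M ⟨1, by omega⟩
  have hprod : ∀ n ∈ N, ∃ m₁ ∈ M₀, ∃ m₂ ∈ M₁, n = m₁ * m₂ :=
    fun n hn => exists_mul_eq_of_ne hconn hbip hNaut hstar.1 (hstar.2.1 v hv) hfree hldt hnorm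
      hMinj hMN hcard (fun i j => Fin.exists_ne_and_ne_of_two_lt i j (by omega)) hblocks
      hcosets (by simp [Fin.ext_iff]) hn
  have hNM : (M₀ : Set (Equiv.Perm V)) * M₁ = N := by
    ext n
    refine ⟨?_, fun hn => ?_⟩
    · rintro ⟨a, ha, b, hb, rfl⟩
      exact N.mul_mem (hMN _ ha) (hMN _ hb)
    · obtain ⟨a, ha, b, hb, rfl⟩ := hprod n hn
      exact Set.mul_mem_mul ha hb
  have : Fact p.Prime := ⟨hp⟩
  refine ⟨hprod, IsPGroup.of_coe_mul_eq (hMp _) (hMp _) hNM, ?_⟩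
  calc Nat.card N = Nat.card ↥((M₀ : Set (Equiv.Perm V)) * (M₁ : Set (Equiv.Perm V))) := by rw [hNM]; rfl
    _ ≤ Nat.card M₀ * Nat.card M₁ := Set.natCard_mul_le
    _ = Nat.card M₀ ^ 2 := by rw [sq, hcard ⟨1, by omega⟩ ⟨0, by omega⟩]
end
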